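/- arXiv:2411.10853 — 6 statements merged into one kernel-verified Lean document; each statement's English description precedes it below -/
import Mathlib

section
/- Let n<m be coprime positive integers and define Z(n,m) = {λ ∈ ℕ : λ > m and λ + n ∉ ⟨n,m⟩}. Every λ ∈ Z(n,m) can be written as λ = i·m − j·n for some natural numbers i, j with 2 ≤ i ≤ n−1 and 2 ≤ j < (i−1)·m/n. -/
theorem stmt2 (n m : ℕ) (hn : 0 < n) (hnm : n < m) (hcop : Nat.Coprime n m)
    (lam : ℕ) (hl : m < lam) (hns : ¬ ∃ a b : ℕ, lam + n = a * n + b * m) :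
    ∃ i j : ℕ, 2 ≤ i ∧ i ≤ n - 1 ∧ 2 ≤ j ∧ (j : ℚ) < ((i : ℚ) - 1) * m / n ∧
      (lam : ℤ) = (i : ℤ) * m - (j : ℤ) * n := by
  have hn2 : 2 ≤ n := by
    rcases Nat.lt_or_ge n 2 with h | h
    · interval_cases n
      exact absurd ⟨lam + 1, 0, by ring⟩ hns
    · exact h
  haveI : NeZero n := ⟨by omega⟩
  have hu : IsUnit (m : ZMod n) := by
    rw [ZMod.isUnit_iff_coprime]
    exact hcop.symm
  set x : ZMod n := ((lam + n : ℕ) : ZMod n) * (m : ZMod n)⁻¹ with hx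
  set i := x.val with hidef
  have hiv : ((i : ℕ) : ZMod n) = x := by
    rw [hidef, ZMod.natCast_val, ZMod.cast_id]
  have hmod : ((i * m : ℕ) : ZMod n) = ((lam + n : ℕ) : ZMod n) := by
    rw [Nat.cast_mul, hiv, hx, mul_assoc, ZMod.inv_mul_of_unit _ hu, mul_one]
  have hme : (i * m) ≡ (lam + n) [MOD n] := (ZMod.natCast_eq_natCast_iff _ _ _).mp hmod
  have hdvd : (n : ℤ) ∣ ((lam + n : ℕ) : ℤ) - ((i * m : ℕ) : ℤ) := hme.dvd
  obtain ⟨t, ht⟩ := hdvd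
  have hnz : (0 : ℤ) < n := by exact_mod_cast hn
  have hlt : lam + n < i * m := by
    by_contra hge
    push_neg at hge
    have hnt : (0 : ℤ) ≤ (n : ℤ) * t := by
      rw [← ht]
      have : ((i * m : ℕ) : ℤ) ≤ ((lam + n : ℕ) : ℤ) := by exact_mod_cast hge
      linarith
    have ht0 : 0 ≤ t := by
      by_contra h
      push_neg at h
      nlinarith
    have hrep : (lam + n : ℤ) = (t.toNat : ℤ) * n + (i : ℤ) * m := by
      rw [Int.toNat_of_nonneg ht0]
      push_cast at ht
      linarith
    exact absurd ⟨t.toNat, i, by exact_mod_cast hrep⟩ hns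
  have ht0 : t < 0 := by
    have hnt : (n : ℤ) * t < 0 := by
      rw [← ht]
      have : ((lam + n : ℕ) : ℤ) < ((i * m : ℕ) : ℤ) := by exact_mod_cast hlt
      linarith
    by_contra h
    push_neg at h
    nlinarith
  have hin : i < n := ZMod.val_lt x
  set J := (-t).toNat with hJdef
  have htJ : (t : ℤ) = -(J : ℤ) := by omega
  have key : (lam : ℤ) + n + J * n = i * m := by
    push_cast at ht
    rw [htJ] at ht
    linarith
  have hml : (m : ℤ) < lam := by exact_mod_cast hl
  have hJ1 : 1 ≤ J := by
    rcases Nat.eq_zero_or_pos J with h | h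
    · exfalso
      rw [h] at key
      push_cast at key
      have : ((lam + n : ℕ) : ℤ) < ((i * m : ℕ) : ℤ) := by exact_mod_cast hlt
      push_cast at this
      linarith
    · exact h
  have hJz : (1 : ℤ) ≤ J := by exact_mod_cast hJ1
  have hi2 : 2 ≤ i := by
    by_contra h
    push_neg at h
    have hi1 : (i : ℤ) ≤ 1 := by exact_mod_cast Nat.lt_succ_iff.mp h
    have h1 : (i : ℤ) * m ≤ 1 * m := by
      apply mul_le_mul_of_nonneg_right hi1
      positivity
    nlinarith [key]
  refine ⟨i, J + 1, hi2, by omega, by omega, ?_, by push_cast; linarith⟩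
  have hkey2 : ((J : ℤ) + 1) * n + m < (i : ℤ) * m := by linarith
  rw [lt_div_iff₀ (by positivity : (0:ℚ) < (n:ℚ))]
  have hq : ((J : ℚ) + 1) * n + m < (i : ℚ) * m := by exact_mod_cast hkey2
  push_cast
  nlinarith [hq, (by positivity : (0:ℚ) ≤ (m:ℚ))]
end

section
/- Let n<m be coprime positive integers. The map Φ sending λ = α·m − β·n (with 2 ≤ α ≤ n−1, 2 ≤ β < (α−1)m/n) to (m−β, α−1) is a bijection from Z(n,m) onto the set of lattice points (i,j) ∈ ℕ² satisfying i < m−1, j < n−1, and m·j + n·i > n·m. -/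
private lemma stmt4_uniq (n m : ℕ) (hn : 0 < n) (hcop : Nat.Coprime n m) (l : ℕ) (p q : ℕ × ℕ)
    (hp : l + n * m = m * (p.2 + 1) + n * p.1 ∧ p.1 < m - 1 ∧ p.2 < n - 1)
    (hq : l + n * m = m * (q.2 + 1) + n * q.1 ∧ q.1 < m - 1 ∧ q.2 < n - 1) : p = q := by
  have hcopZ : IsCoprime (n : ℤ) (m : ℤ) := Nat.isCoprime_iff_coprime.mpr hcop
  have heq : (m : ℤ) * ((p.2 : ℤ) + 1) + n * p.1 = m * ((q.2 : ℤ) + 1) + n * q.1 := by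
    have h := hp.1.symm.trans hq.1
    have h' : ((m * (p.2 + 1) + n * p.1 : ℕ) : ℤ) = ((m * (q.2 + 1) + n * q.1 : ℕ) : ℤ) := by
      exact_mod_cast h
    push_cast at h'
    linarith
  have hdvd : (n : ℤ) ∣ (m : ℤ) * ((p.2 : ℤ) - q.2) := ⟨(q.1 : ℤ) - p.1, by linarith⟩
  have h2 : (n : ℤ) ∣ ((p.2 : ℤ) - q.2) := hcopZ.dvd_of_dvd_mul_left hdvd
  have hpn : p.2 < n := by omega
  have hqn : q.2 < n := by omega
  have habs : |(p.2 : ℤ) - q.2| < n := by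
    rw [abs_lt]
    constructor <;> [push_cast; push_cast] <;> omega
  have h3 : (p.2 : ℤ) = q.2 := by
    have := Int.eq_zero_of_abs_lt_dvd h2 habs
    linarith
  have h22 : p.2 = q.2 := by exact_mod_cast h3
  have h11 : p.1 = q.1 := by
    have hne : (n : ℤ) ≠ 0 := by exact_mod_cast hn.ne'
    have : (n : ℤ) * p.1 = n * q.1 := by rw [h3] at heq; linarith
    exact_mod_cast mul_left_cancel₀ hne this
  exact Prod.ext h11 h22

private lemma stmt4_ex (n m : ℕ) (hn : 0 < n) (hnm : n < m) (hcop : Nat.Coprime n m) (l : ℕ)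
    (hl1 : m < l) (hl2 : ¬ ∃ a b : ℕ, l + n = a * n + b * m) :
    ∃ p : ℕ × ℕ, l + n * m = m * (p.2 + 1) + n * p.1 ∧ p.1 < m - 1 ∧ p.2 < n - 1 := by
  haveI : NeZero n := ⟨hn.ne'⟩
  have hu : IsUnit (m : ZMod n) := (ZMod.isUnit_iff_coprime m n).mpr hcop.symm
  set k := ((l : ZMod n) * (m : ZMod n)⁻¹).val with hk
  have hkn : k < n := ZMod.val_lt _
  have hcast : ((m * k : ℕ) : ZMod n) = (l : ZMod n) := by
    push_cast
    have hkc : ((k : ℕ) : ZMod n) = (l : ZMod n) * (m : ZMod n)⁻¹ := by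
      simp [hk, ZMod.natCast_val]
    rw [hkc, mul_comm ((l : ZMod n)) _, ← mul_assoc, ZMod.mul_inv_of_unit _ hu, one_mul]
  have hmod : m * k ≡ l [MOD n] := (ZMod.natCast_eq_natCast_iff _ _ _).mp hcast
  have hk0 : k ≠ 0 := by
    intro h0
    have hdl : n ∣ l := by
      have hh := hmod
      rw [h0, Nat.mul_zero] at hh
      exact (Nat.modEq_zero_iff_dvd).mp hh.symm
    exact hl2 ⟨l / n + 1, 0, by
      rw [zero_mul, add_zero, add_mul, one_mul, Nat.div_mul_cancel hdl]⟩
  have hm0 : 0 < m := by omega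
  have hmkl : m * k ≤ l + n * m := by
    have h1 : m * k < m * n := (Nat.mul_lt_mul_left hm0).mpr hkn
    have h2 : m * n = n * m := mul_comm m n
    omega
  have hmod2 : m * k ≡ l + n * m [MOD n] := by
    have h1 : l + n * m ≡ l + 0 [MOD n] :=
      (Nat.ModEq.refl l).add ((Nat.modEq_zero_iff_dvd).mpr ⟨m, rfl⟩)
    rw [add_zero] at h1
    exact hmod.trans h1.symm
  have hdvd : n ∣ (l + n * m - m * k) := (Nat.modEq_iff_dvd' hmkl).mp hmod2
  set i := (l + n * m - m * k) / n with hi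
  have hni : i * n = l + n * m - m * k := Nat.div_mul_cancel hdvd
  have heq : l + n * m = m * k + n * i := by
    have h1 : n * i = l + n * m - m * k := by rw [mul_comm]; exact hni
    rw [h1]
    exact (Nat.add_sub_cancel' hmkl).symm
  have heqZ : (l : ℤ) + n * m = m * k + n * i := by exact_mod_cast heq
  have hilt : i < m - 1 := by
    by_contra hcon
    push_neg at hcon
    apply hl2
    refine ⟨i + 1 - m, k, ?_⟩
    have hm1 : m ≤ i + 1 := by omega
    have hgoal : (l : ℤ) + n = ((i : ℤ) + 1 - m) * n + k * m := by push_cast; ring_nf; linarith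
    have : ((l + n : ℕ) : ℤ) = (((i + 1 - m) * n + k * m : ℕ) : ℤ) := by
      push_cast [Nat.cast_sub hm1]
      linarith [hgoal]
    exact_mod_cast this
  refine ⟨(i, k - 1), ?_, hilt, by omega⟩
  simpa [Nat.sub_add_cancel (Nat.one_le_iff_ne_zero.mpr hk0)] using heq

private lemma stmt4_mem (n m : ℕ) (hn : 0 < n) (hnm : n < m) (hcop : Nat.Coprime n m)
    (p : ℕ × ℕ) (hp1 : p.1 < m - 1) (hp2 : p.2 < n - 1) (hp3 : n * m < m * p.2 + n * p.1) :
    (m * (p.2 + 1) + n * p.1 - n * m) + n * m = m * (p.2 + 1) + n * p.1 ∧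
    m < m * (p.2 + 1) + n * p.1 - n * m ∧
    ¬ ∃ a b : ℕ, (m * (p.2 + 1) + n * p.1 - n * m) + n = a * n + b * m := by
  have hcopZ : IsCoprime (n : ℤ) (m : ℤ) := Nat.isCoprime_iff_coprime.mpr hcop
  have hx : m * (p.2 + 1) = m * p.2 + m := by ring
  have hge : n * m + m ≤ m * (p.2 + 1) + n * p.1 := by omega
  have heq : (m * (p.2 + 1) + n * p.1 - n * m) + n * m = m * (p.2 + 1) + n * p.1 :=
    Nat.sub_add_cancel (by omega)
  refine ⟨heq, by omega, ?_⟩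
  rintro ⟨a, b, hab⟩
  set l := m * (p.2 + 1) + n * p.1 - n * m with hl
  have heqZ : (l : ℤ) + n * m = m * ((p.2 : ℤ) + 1) + n * p.1 := by exact_mod_cast heq
  have habZ : (l : ℤ) + n = a * n + b * m := by exact_mod_cast hab
  -- m * (p.2 + 1 - b) = n * (a + m - 1 - p.1)
  have hkey : (m : ℤ) * ((p.2 : ℤ) + 1 - b) = n * ((a : ℤ) + m - 1 - p.1) := by ring_nf; linarith
  have hdvd : (n : ℤ) ∣ (m : ℤ) * ((p.2 : ℤ) + 1 - b) := ⟨(a : ℤ) + m - 1 - p.1, hkey⟩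
  have h2 : (n : ℤ) ∣ ((p.2 : ℤ) + 1 - b) := hcopZ.dvd_of_dvd_mul_left hdvd
  have hmZ : (0 : ℤ) < m := by exact_mod_cast (by omega : 0 < m)
  have hnZ : (0 : ℤ) < n := by exact_mod_cast hn
  rcases le_or_gt ((p.2 : ℤ) + 1 - b) 0 with hle | hgt
  · -- then RHS ≤ 0, so p.1 ≥ a + m - 1 ≥ m - 1, contradiction
    have hr : (n : ℤ) * ((a : ℤ) + m - 1 - p.1) ≤ 0 := by
      rw [← hkey]
      exact mul_nonpos_of_nonneg_of_nonpos hmZ.le hle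
    have : ((a : ℤ) + m - 1 - p.1) ≤ 0 := nonpos_of_mul_nonpos_right ?x hnZ
    case x => exact hr
    have hp1Z : (p.1 : ℤ) < (m : ℤ) - 1 := by
      have : (p.1 : ℤ) < ((m - 1 : ℕ) : ℤ) := by exact_mod_cast hp1
      omega
    have haZ : (0 : ℤ) ≤ a := Int.natCast_nonneg a
    linarith
  · have hub : (p.2 : ℤ) + 1 - b < n := by
      have : (p.2 : ℤ) < ((n - 1 : ℕ) : ℤ) := by exact_mod_cast hp2
      omega
    have := Int.le_of_dvd hgt h2
    omega

open Classical in
private noncomputable def stmt4Phi (n m : ℕ) : ℕ → ℕ × ℕ := fun l =>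
  if h : ∃ p : ℕ × ℕ, l + n * m = m * (p.2 + 1) + n * p.1 ∧ p.1 < m - 1 ∧ p.2 < n - 1
  then h.choose else (0, 0)

private lemma stmt4Phi_spec (n m l : ℕ)
    (h : ∃ p : ℕ × ℕ, l + n * m = m * (p.2 + 1) + n * p.1 ∧ p.1 < m - 1 ∧ p.2 < n - 1) :
    l + n * m = m * ((stmt4Phi n m l).2 + 1) + n * (stmt4Phi n m l).1 ∧
    (stmt4Phi n m l).1 < m - 1 ∧ (stmt4Phi n m l).2 < n - 1 := by
  unfold stmt4Phi
  rw [dif_pos h]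
  exact h.choose_spec

private lemma stmt4Phi_eq (n m l : ℕ) (hn : 0 < n) (hcop : Nat.Coprime n m) (w : ℕ × ℕ)
    (hw : l + n * m = m * (w.2 + 1) + n * w.1 ∧ w.1 < m - 1 ∧ w.2 < n - 1) :
    stmt4Phi n m l = w := by
  have h : ∃ p : ℕ × ℕ, l + n * m = m * (p.2 + 1) + n * p.1 ∧ p.1 < m - 1 ∧ p.2 < n - 1 := ⟨w, hw⟩
  unfold stmt4Phi
  rw [dif_pos h]
  exact stmt4_uniq n m hn hcop l _ _ h.choose_spec hw

theorem stmt4 (n m : ℕ) (hn : 0 < n) (hnm : n < m) (hcop : Nat.Coprime n m) :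
    ∃ Φ : ℕ → ℕ × ℕ,
      (∀ lam ∈ {l : ℕ | m < l ∧ ¬ ∃ a b : ℕ, l + n = a * n + b * m},
        ∀ α β : ℕ, 2 ≤ α → α ≤ n - 1 → 2 ≤ β → (β : ℚ) < ((α : ℚ) - 1) * m / n →
          (lam : ℤ) = (α : ℤ) * m - (β : ℤ) * n → Φ lam = (m - β, α - 1)) ∧
      Set.BijOn Φ {l : ℕ | m < l ∧ ¬ ∃ a b : ℕ, l + n = a * n + b * m}
        {ij : ℕ × ℕ | ij.1 < m - 1 ∧ ij.2 < n - 1 ∧ n * m < m * ij.2 + n * ij.1} := by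
  refine ⟨stmt4Phi n m, ?_, ?_, ?_, ?_⟩
  · -- formula
    intro lam hlam α β hα hαn hβ hβq heq
    have hn3 : 3 ≤ n := by omega
    have hα1 : 1 ≤ α := by omega
    have hq0 : (0 : ℚ) < n := by exact_mod_cast hn
    have h1 : (β : ℚ) * n < ((α : ℚ) - 1) * m := by
      have := (lt_div_iff₀ hq0).mp hβq
      linarith
    have h2 : β * n < (α - 1) * m := by
      have hc : ((β * n : ℕ) : ℚ) < (((α - 1) * m : ℕ) : ℚ) := by
        push_cast [Nat.cast_sub hα1]
        linarith
      exact_mod_cast hc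
    have hβm : β < m := by
      by_contra hcon
      push_neg at hcon
      have ha : (α - 1) * m ≤ n * m := Nat.mul_le_mul_right m (by omega)
      have hb : m * n ≤ β * n := Nat.mul_le_mul_right n hcon
      have hc : m * n = n * m := mul_comm m n
      omega
    have hw : lam + n * m = m * ((α - 1) + 1) + n * (m - β) := by
      have hz : (lam : ℤ) + n * m = m * (((α : ℤ) - 1) + 1) + n * ((m : ℤ) - β) := by
        push_cast
        linarith [heq]
      have hc : ((lam + n * m : ℕ) : ℤ) = ((m * ((α - 1) + 1) + n * (m - β) : ℕ) : ℤ) := by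
        push_cast [Nat.cast_sub hα1, Nat.cast_sub hβm.le]
        linarith [hz]
      exact_mod_cast hc
    exact stmt4Phi_eq n m lam hn hcop (m - β, α - 1) ⟨hw, by omega, by omega⟩
  · -- MapsTo
    intro l hl
    obtain ⟨hl1, hl2⟩ := hl
    have hex := stmt4_ex n m hn hnm hcop l hl1 hl2
    obtain ⟨he, h1, h2⟩ := stmt4Phi_spec n m l hex
    refine ⟨h1, h2, ?_⟩
    have hx : m * ((stmt4Phi n m l).2 + 1) = m * (stmt4Phi n m l).2 + m := by ring
    linarith [he, hx, hl1]
  · -- InjOn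
    intro a ha b hb hab
    obtain ⟨ha1, ha2⟩ := ha
    obtain ⟨hb1, hb2⟩ := hb
    have hea := (stmt4Phi_spec n m a (stmt4_ex n m hn hnm hcop a ha1 ha2)).1
    have heb := (stmt4Phi_spec n m b (stmt4_ex n m hn hnm hcop b hb1 hb2)).1
    rw [hab] at hea
    exact Nat.add_right_cancel (hea.trans heb.symm)
  · -- SurjOn
    intro p hp
    obtain ⟨hp1, hp2, hp3⟩ := hp
    obtain ⟨heq, hlt, hnonrep⟩ := stmt4_mem n m hn hnm hcop p hp1 hp2 hp3
    refine ⟨m * (p.2 + 1) + n * p.1 - n * m, ⟨hlt, hnonrep⟩, ?_⟩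
    exact stmt4Phi_eq n m _ hn hcop p ⟨heq, hp1, hp2⟩
end

section
/- Let n<m be coprime positive integers, λ ∈ Z(n,m) with Φ(λ) = (p,q) (so np + mq = (n−1)m + λ, 0 < p < m−1, 0 < q < n−1). If λ < 2m − n then n < p + q < m. -/
theorem stmt6 (n m : ℕ) (hn : 2 < n) (hnm : n < m) (hcop : Nat.Coprime n m)
    (lam : ℕ) (hl : m < lam) (hns : ¬ ∃ a b : ℕ, lam + n = a * n + b * m)
    (p q : ℕ) (hΦ : n * p + m * q = (n - 1) * m + lam)
    (hp : 0 < p) (hp' : p ≤ m - 2) (hq : 0 < q) (hq' : q ≤ n - 2)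
    (hlt : (lam : ℤ) < 2 * m - n) :
    n < p + q ∧ p + q < m := by
  have h1 : (n : ℤ) * p + m * q = (n - 1) * m + lam := by
    have := congrArg (Nat.cast : ℕ → ℤ) hΦ
    push_cast [Nat.cast_sub (by omega : 1 ≤ n)] at this
    linarith
  have hq2 : (q : ℤ) ≤ (n : ℤ) - 2 := by
    have : (q : ℤ) ≤ ((n - 2 : ℕ) : ℤ) := by exact_mod_cast hq'
    rwa [Nat.cast_sub (by omega : 2 ≤ n)] at this
  have hq1 : (1 : ℤ) ≤ q := by exact_mod_cast hq
  have hl' : (m : ℤ) < lam := by exact_mod_cast hl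
  have hnm' : (n : ℤ) < m := by exact_mod_cast hnm
  constructor
  · have : (n : ℤ) < p + q := by
      nlinarith [mul_nonneg (by linarith : (0:ℤ) ≤ (m:ℤ) - n)
        (by linarith : (0:ℤ) ≤ (n:ℤ) - 2 - q)]
    exact_mod_cast this
  · have : (p : ℤ) + q < m := by
      nlinarith [mul_le_mul_of_nonneg_left hq1 (by linarith : (0:ℤ) ≤ (m:ℤ) - n)]
    exact_mod_cast this
end

section
/- Let n<m be coprime, λ ∈ Z(n,m) with Φ(λ) = (p,q). Define T_λ = {(x,y) ∈ ℕ² : p < x < m−1, 0 < y < q, and (q−1)/(m−1−p) ≤ (q−y)/(x−p) < n/m}. If λ > 2m − n, then T_λ = ∅. -/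
def Tset (n m p q : ℕ) : Set (ℕ × ℕ) :=
  {xy : ℕ × ℕ | p < xy.1 ∧ xy.1 < m - 1 ∧ 0 < xy.2 ∧ xy.2 < q ∧
    ((q : ℚ) - 1) / ((m : ℚ) - 1 - p) ≤ ((q : ℚ) - xy.2) / ((xy.1 : ℚ) - p) ∧
    ((q : ℚ) - xy.2) / ((xy.1 : ℚ) - p) < (n : ℚ) / m}

theorem stmt7 (n m : ℕ) (hn : 2 < n) (hnm : n < m) (hcop : Nat.Coprime n m)
    (lam : ℕ) (hl : m < lam) (hns : ¬ ∃ a b : ℕ, lam + n = a * n + b * m)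
    (p q : ℕ) (hΦ : n * p + m * q = (n - 1) * m + lam)
    (hp : 0 < p) (hp' : p ≤ m - 2) (hq : 0 < q) (hq' : q ≤ n - 2)
    (hgt : (lam : ℤ) > 2 * m - n) :
    Tset n m p q = ∅ := by
  rw [Set.eq_empty_iff_forall_notMem]
  rintro ⟨x, y⟩ ⟨hx1, hx2, hy1, hy2, h1, h2⟩
  have hm4 : 4 ≤ m := by omega
  have hp2 : p + 2 ≤ m := by omega
  have hA : (0 : ℚ) < (x : ℚ) - p := by
    have : (p : ℚ) < x := by exact_mod_cast hx1
    linarith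
  have hB : (0 : ℚ) < (m : ℚ) - 1 - p := by
    have : (p : ℚ) + 2 ≤ m := by exact_mod_cast hp2
    linarith
  have hm0 : (0 : ℚ) < m := by positivity
  have hV : (1 : ℚ) ≤ (q : ℚ) - y := by
    have : (y : ℚ) + 1 ≤ q := by exact_mod_cast hy2
    linarith
  have h2' : (m : ℚ) * ((q : ℚ) - y) < n * ((x : ℚ) - p) := by
    rw [div_lt_div_iff₀ hA hm0] at h2
    linarith
  have h1' : ((q : ℚ) - 1) * ((x : ℚ) - p) ≤ ((q : ℚ) - y) * ((m : ℚ) - 1 - p) := by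
    rw [div_le_div_iff₀ hB hA] at h1
    linarith
  have key : ((q : ℚ) - 1) * m * ((x : ℚ) - p) < n * ((m : ℚ) - 1 - p) * ((x : ℚ) - p) := by
    nlinarith [mul_lt_mul_of_pos_right h2' hB, mul_le_mul_of_nonneg_left h1' hm0.le]
  have key2 : ((q : ℚ) - 1) * m < n * ((m : ℚ) - 1 - p) :=
    lt_of_mul_lt_mul_right (by linarith [key]) hA.le
  have hΦ' : (n : ℚ) * p + m * q = ((n : ℚ) - 1) * m + lam := by
    have h : (n : ℤ) * p + m * q = ((n : ℤ) - 1) * m + lam := by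
      have := hΦ
      zify [show 1 ≤ n by omega] at this
      linarith
    exact_mod_cast h
  have hgt' : (lam : ℚ) > 2 * m - n := by exact_mod_cast hgt
  nlinarith [key2, hΦ', hgt']
end

section
/- Let m ≥ 7 with gcd(3,m) = 1. Every λ ∈ Z(3,m) has the form λ = 2m − 3j for some j with 2 ≤ j < m/3; equivalently, Φ(λ) = (m−j, 1), so the second coordinate of Φ(λ) is always 1. -/
theorem stmt9 (m : ℕ) (hm : 7 ≤ m) (hcop : Nat.Coprime 3 m)
    (lam : ℕ) (hl : m < lam) (hns : ¬ ∃ a b : ℕ, lam + 3 = a * 3 + b * m) :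
    ∃ j : ℕ, 2 ≤ j ∧ 3 * j < m ∧ lam + 3 * j = 2 * m ∧
      3 * (m - j) + m * 1 = 2 * m + lam := by
  have h3m : m % 3 ≠ 0 := by
    intro h
    have hd : (3:ℕ) ∣ m := Nat.dvd_of_mod_eq_zero h
    have := Nat.gcd_eq_left hd
    have hc := hcop
    unfold Nat.Coprime at hc
    omega
  have hA : (lam + 3) % 3 ≠ 0 := by
    intro h
    exact hns ⟨(lam + 3) / 3, 0, by omega⟩
  have hB : (lam + 3) % 3 ≠ m % 3 := by
    intro h
    exact hns ⟨(lam + 3 - m) / 3, 1, by omega⟩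
  have hC : ¬ (2 * m ≤ lam + 3 ∧ (lam + 3) % 3 = (2 * m) % 3) := by
    rintro ⟨h1, h2⟩
    exact hns ⟨(lam + 3 - 2 * m) / 3, 2, by omega⟩
  have hD : lam + 3 < 2 * m := by
    by_contra h
    exact hC ⟨by omega, by omega⟩
  have hE0 : (lam + 3) % 3 = (2 * m) % 3 := by omega
  have hE : (2 * m - lam) % 3 = 0 := by omega
  exact ⟨(2 * m - lam) / 3, by omega, by omega, by omega, by omega⟩
end

section
/- Let n<m be coprime, λ ∈ Z(n,m) with Φ(λ) = (p,q), and let (i,j) ∈ I_λ = {(i,j) ∈ ℕ² : in + jm > pn + qm, i ≤ m−2, j ≤ n−2} with q−1 < j < n−1. Then both points (i−1,j) and (i,j−1) lie strictly above the line through N = (0,n−1) and B = (p,q−1), i.e., (n−q)x + py > (n−1)p at these points. -/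
theorem stmt13 (n m : ℕ) (hn : 2 < n) (hnm : n < m) (hcop : Nat.Coprime n m)
    (lam : ℕ) (hl : m < lam) (hns : ¬ ∃ a b : ℕ, lam + n = a * n + b * m)
    (p q : ℕ) (hΦ : n * p + m * q = (n - 1) * m + lam)
    (hp : 0 < p) (hp' : p ≤ m - 2) (hq : 0 < q) (hq' : q ≤ n - 2)
    (hlt : (lam : ℤ) < 2 * m - n)
    (i j : ℕ) (hij : i * n + j * m > p * n + q * m) (hi : i ≤ m - 2) (hj : j ≤ n - 2)
    (hj1 : q - 1 < j) (hj2 : j < n - 1) :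
    ((n : ℤ) - q) * ((i : ℤ) - 1) + (p : ℤ) * j > ((n : ℤ) - 1) * p ∧
    ((n : ℤ) - q) * i + (p : ℤ) * ((j : ℤ) - 1) > ((n : ℤ) - 1) * p := by
  have h1n : 1 ≤ n := by omega
  have hΦZ : (n:ℤ) * p + m * q = ((n:ℤ) - 1) * m + lam := by
    zify [h1n] at hΦ; linarith
  have hijZ : (i:ℤ) * n + j * m > (p:ℤ) * n + q * m := by exact_mod_cast hij
  have hml : (m:ℤ) < lam := by exact_mod_cast hl
  have hmn : (n:ℤ) < m := by exact_mod_cast hnm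
  have hjq : (q:ℤ) ≤ j := by
    have h : q ≤ j := by omega
    exact_mod_cast h
  have hjn : (j:ℤ) + 1 < n := by
    have h : j + 1 < n := by omega
    exact_mod_cast h
  have hqn : (q:ℤ) + 2 ≤ n := by
    have h : q + 2 ≤ n := by omega
    exact_mod_cast h
  have hpZ : (1:ℤ) ≤ p := by exact_mod_cast hp
  have hqZ : (1:ℤ) ≤ q := by exact_mod_cast hq
  have hnZ : (3:ℤ) ≤ n := by exact_mod_cast hn
  -- p + q > n
  have hpq : (n:ℤ) < p + q := by
    nlinarith [mul_pos (show (0:ℤ) < p by linarith) (show (0:ℤ) < (m:ℤ) - n by linarith)]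
  -- i*n lower bound
  have hij1 : (p:ℤ) * n + q * m + 1 ≤ (i:ℤ) * n + j * m := Int.add_one_le_of_lt hijZ
  have hA : (0:ℤ) ≤ (i:ℤ) * n - (((n:ℤ) - 1 - j) * m + lam + 1) := by linarith
  have hB : (0:ℤ) ≤ ((j:ℤ) - q) * ((lam:ℤ) - m) := by
    apply mul_nonneg <;> linarith
  have hpn : (p:ℤ) * n = ((n:ℤ) - 1 - q) * m + lam := by linarith
  have hid : (n:ℤ) * (((n:ℤ) - q) * i + p * j - n * p) =
      ((n:ℤ) - q) * ((i:ℤ) * n - (((n:ℤ) - 1 - j) * m + lam + 1)) +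
      ((j:ℤ) - q) * ((lam:ℤ) - m) + ((n:ℤ) - q) := by
    linear_combination ((j:ℤ) - n) * hpn
  have hA' : (0:ℤ) ≤ ((n:ℤ) - q) * ((i:ℤ) * n - (((n:ℤ) - 1 - j) * m + lam + 1)) := by
    apply mul_nonneg <;> linarith
  have hX : (0:ℤ) < n * (((n:ℤ) - q) * i + p * j - n * p) := by linarith
  have hkey : ((n:ℤ) - q) * i + p * j > (n:ℤ) * p := by
    rcases mul_pos_iff.mp hX with ⟨_, h⟩ | ⟨h, _⟩
    · linarith
    · linarith
  clear hns hcop hΦ hij hlt hi hj hj1 hj2 hl hp' hq' hn hnm hq hp h1n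
  constructor
  · linarith
  · linarith
end
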